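/- For every spanoid S on a nonempty finite ground set X, rank(S) ≤ log₂ |C_S|, where C_S is the family of closed sets of S (equivalently, rank(S) ≤ log₂ |O_S| where O_S is the family of open sets, since |C_S| = |O_S|). -/
import Mathlib


open scoped BigOperators

/-- A spanoid on ground set `X`: a set of inference rules `(A, i)`,
read as "`A` spans `i`". -/
abbrev SpanoidOn (X : Type) : Type := Set (Set X × X)

/-- The span of `T`: the smallest superset `T'` of `T` such that whenever `(A, i)` is a
rule with `A ⊆ T'`, also `i ∈ T'`. -/
def sSpan {X : Type} (S : SpanoidOn X) (T : Set X) : Set X :=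
  ⋂₀ {T' : Set X | T ⊆ T' ∧ ∀ p ∈ S, p.1 ⊆ T' → p.2 ∈ T'}

/-- The rank of a spanoid: the minimum size of a subset spanning the whole ground set. -/
noncomputable def sRank {X : Type} [Fintype X] (S : SpanoidOn X) : ℕ :=
  sInf {k : ℕ | ∃ T : Set X, T.ncard = k ∧ sSpan S T = Set.univ}

/-- A set is closed if it equals its own span. -/
def sClosed {X : Type} (S : SpanoidOn X) (B : Set X) : Prop := sSpan S B = B

/-- A set is open if its complement is closed. -/
def sOpen {X : Type} (S : SpanoidOn X) (B : Set X) : Prop := sClosed S Bᶜ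

/-- A code `C ⊆ K^X` is consistent with the spanoid `S` if for every rule `(A, i)` of `S`
there is a function `g` with `c i = g (c|_A)` for all codewords `c ∈ C`. -/
def sConsistent {X K : Type} (S : SpanoidOn X) (C : Set (X → K)) : Prop :=
  ∀ p ∈ S, ∃ g : (↥p.1 → K) → K, ∀ c ∈ C, c p.2 = g (fun a => c a.1)

/-- The functional rank of a spanoid: the supremum of `log |C| / log |Σ|` over all finite
alphabets `Σ` (of size at least 2) and all codes `C ⊆ Σ^X` consistent with `S`. -/
noncomputable def sFrank {X : Type} (S : SpanoidOn X) : ℝ :=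
  sSup {d : ℝ | ∃ m : ℕ, 2 ≤ m ∧ ∃ C : Set (X → Fin m),
    sConsistent S C ∧ d = Real.log (Nat.card C) / Real.log m}

/-- Feasibility for the entropy linear program of a spanoid. -/
def sEntFeasible {X : Type} (S : SpanoidOn X) (f : Set X → ℝ) : Prop :=
  f ∅ = 0 ∧ (∀ i : X, f {i} ≤ 1) ∧
  (∀ A B : Set X, f (A ∪ B) + f (A ∩ B) ≤ f A + f B) ∧
  (∀ A B : Set X, A ⊆ B → f A ≤ f B) ∧
  (∀ A : Set X, ∀ i ∈ sSpan S A, f (A ∪ {i}) = f A)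

/-- The optimum of the entropy linear program: maximize `f(X)` over feasible `f`. -/
noncomputable def sLPentropy {X : Type} (S : SpanoidOn X) : ℝ :=
  sSup {y : ℝ | ∃ f : Set X → ℝ, sEntFeasible S f ∧ y = f Set.univ}

/-- The optimum of the covering linear program: minimize `∑ i, x i` over `x ≥ 0` such that
`∑_{i ∈ B} x i ≥ 1` for every nonempty open set `B`. -/
noncomputable def sLPcover {X : Type} [Fintype X] (S : SpanoidOn X) : ℝ :=
  sInf {y : ℝ | ∃ x : X → ℝ, (∀ i, 0 ≤ x i) ∧
    (∀ B : Set X, B.Nonempty → sOpen S B → 1 ≤ ∑ i, B.indicator x i) ∧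
    y = ∑ i, x i}

/-- A spanoid on `[n]` is a `q`-LCS with error-tolerance `δ` if every `i` is spanned by at
least `δ n` pairwise disjoint `q`-element subsets. -/
def sIsLCS {n : ℕ} (q : ℕ) (δ : ℝ) (S : SpanoidOn (Fin n)) : Prop :=
  ∀ i : Fin n, ∃ M : Finset (Finset (Fin n)),
    δ * n ≤ (M.card : ℝ) ∧
    (∀ A ∈ M, A.card = q) ∧
    ((M : Set (Finset (Fin n))).Pairwise fun A B => Disjoint A B) ∧
    ∀ A ∈ M, ((A : Set (Fin n)), i) ∈ S


section Aux
variable {X : Type} (S : SpanoidOn X)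

lemma subset_sSpan (T : Set X) : T ⊆ sSpan S T := by
  intro x hx T' hT'; exact hT'.1 hx

lemma sSpan_mem (T : Set X) :
    sSpan S T ∈ {T' : Set X | T ⊆ T' ∧ ∀ p ∈ S, p.1 ⊆ T' → p.2 ∈ T'} := by
  refine ⟨subset_sSpan S T, fun p hp hsub => ?_⟩
  intro T' hT'
  exact hT'.2 p hp (hsub.trans (Set.sInter_subset_of_mem hT'))

lemma sSpan_min {T B : Set X} (hTB : T ⊆ B)
    (hB : ∀ p ∈ S, p.1 ⊆ B → p.2 ∈ B) : sSpan S T ⊆ B :=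
  Set.sInter_subset_of_mem ⟨hTB, hB⟩

lemma sSpan_mono {T U : Set X} (h : T ⊆ U) : sSpan S T ⊆ sSpan S U :=
  sSpan_min S (h.trans (subset_sSpan S U)) (sSpan_mem S U).2

lemma sSpan_idem (T : Set X) : sSpan S (sSpan S T) = sSpan S T :=
  le_antisymm (sSpan_min S le_rfl (sSpan_mem S T).2) (subset_sSpan S _)

lemma sClosed_sSpan (T : Set X) : sClosed S (sSpan S T) := sSpan_idem S T

lemma sSpan_univ : sSpan S (Set.univ : Set X) = Set.univ :=
  le_antisymm (Set.subset_univ _) (subset_sSpan S _)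

end Aux

lemma rank_mem {X : Type} [Fintype X] (S : SpanoidOn X) :
    ∃ T : Set X, T.ncard = sRank S ∧ sSpan S T = Set.univ := by
  have hne : {k : ℕ | ∃ T : Set X, T.ncard = k ∧ sSpan S T = Set.univ}.Nonempty :=
    ⟨(Set.univ : Set X).ncard, Set.univ, rfl, sSpan_univ S⟩
  exact Nat.sInf_mem hne

lemma two_pow_rank_le {X : Type} [Fintype X] (S : SpanoidOn X) :
    2 ^ sRank S ≤ ({B : Set X | sClosed S B}.ncard) := by
  classical
  obtain ⟨T, hTcard, hTspan⟩ := rank_mem S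
  have hTfin : T.Finite := Set.toFinite T
  have key : ∀ t ∈ T, ∀ B : Set X, B ⊆ T \ {t} → t ∈ sSpan S B → False := by
    intro t ht B hBsub htB
    have h1 : sSpan S B ⊆ sSpan S (T \ {t}) := sSpan_mono S hBsub
    have h2 : T ⊆ sSpan S (T \ {t}) := by
      intro x hx
      by_cases hxt : x = t
      · exact hxt ▸ h1 htB
      · exact subset_sSpan S _ ⟨hx, hxt⟩
    have h3 : sSpan S (T \ {t}) = Set.univ := by
      apply le_antisymm (Set.subset_univ _)
      calc Set.univ = sSpan S T := hTspan.symm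
        _ ⊆ sSpan S (sSpan S (T \ {t})) := sSpan_mono S h2
        _ = sSpan S (T \ {t}) := sSpan_idem S _
    have hmem : (T \ {t}).ncard ∈
        {k : ℕ | ∃ T : Set X, T.ncard = k ∧ sSpan S T = Set.univ} :=
      ⟨T \ {t}, rfl, h3⟩
    have hlt : (T \ {t}).ncard < T.ncard :=
      Set.ncard_diff_singleton_lt_of_mem ht hTfin
    have h4 : sRank S ≤ (T \ {t}).ncard := Nat.sInf_le hmem
    omega
  have aux : ∀ A B : Set X, A ⊆ T → B ⊆ T → sSpan S A = sSpan S B →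
      ∀ t, t ∈ A → t ∉ B → False := by
    intro A B hA hB hAB t htA htB
    exact key t (hA htA) B (fun x hx => ⟨hB hx, fun hxt => htB (hxt ▸ hx)⟩)
      (hAB ▸ subset_sSpan S A htA)
  set P : Finset (Set X) := hTfin.toFinset.powerset.image (fun A : Finset X => (A : Set X)) with hP
  set G : Set X → Set X := fun A => sSpan S A with hG
  have hsubT : ∀ A ∈ P, A ⊆ T := by
    intro A hA
    rcases Finset.mem_image.mp hA with ⟨B, hB, rfl⟩
    intro x hx
    exact hTfin.mem_toFinset.mp (Finset.mem_powerset.mp hB (Finset.mem_coe.mp hx))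
  have hinj : Set.InjOn G ↑P := by
    intro A hA B hB hAB
    ext x
    constructor <;> intro hx
    · by_contra hxB
      exact aux A B (hsubT A hA) (hsubT B hB) hAB x hx hxB
    · by_contra hxA
      exact aux B A (hsubT B hB) (hsubT A hA) hAB.symm x hx hxA
  have himg : G '' ↑P ⊆ {B : Set X | sClosed S B} := by
    rintro _ ⟨A, -, rfl⟩; exact sClosed_sSpan S A
  have hPcard : P.card = 2 ^ sRank S := by
    rw [hP, Finset.card_image_of_injective _ Finset.coe_injective, Finset.card_powerset]
    rw [← hTcard, Set.ncard_eq_toFinset_card T hTfin]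
  calc 2 ^ sRank S = (↑P : Set (Set X)).ncard := by
        rw [Set.ncard_coe_finset, hPcard]
    _ = (G '' ↑P).ncard := (Set.ncard_image_of_injOn hinj).symm
    _ ≤ ({B : Set X | sClosed S B}).ncard :=
        Set.ncard_le_ncard himg (Set.toFinite _)

/-- `rank(S) ≤ log₂ |C_S|` where `C_S` is the family of closed sets of `S`. -/
theorem rank_le_log_closed {X : Type} [Fintype X] [Nonempty X] (S : SpanoidOn X) :
    (sRank S : ℝ) ≤ Real.logb 2 ({B : Set X | sClosed S B}.ncard : ℝ) := by
  have h := two_pow_rank_le S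
  have hR : (2 : ℝ) ^ (sRank S : ℕ) ≤ ({B : Set X | sClosed S B}.ncard : ℝ) := by
    exact_mod_cast h
  have hpos : (0 : ℝ) < ({B : Set X | sClosed S B}.ncard : ℝ) :=
    lt_of_lt_of_le (by positivity) hR
  rw [Real.le_logb_iff_rpow_le (by norm_num) hpos]
  rw [show ((sRank S : ℕ) : ℝ) = ((sRank S : ℕ) : ℝ) from rfl, Real.rpow_natCast]
  exact hR
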